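/- Let Γ be a moment graph on Λ, ξ = {ξ_v} a Γ-monodromy, and i ≥ 0. Each ξ_v induces an automorphism of S^{≤i}_ℚ(Λ), and the truncated additive ξ-characteristic map c^ξ : S^{≤i}_ℚ(Λ) → Z_a^{≤i}(Γ)_ℚ, z ↦ (ξ_v(z))_{v∈V}, is well defined. Then the localized Chern character respects the ξ-characteristic maps: c^ξ ∘ ch_i = cch_i ∘ c^ξ as maps ℤ[Λ] → Z_a^{≤i}(Γ)_ℚ, where on the right c^ξ : ℤ[Λ] → Z_m(Γ) is the multiplicative ξ-characteristic map z ↦ (ξ_v(z))_v (with ξ_v acting on ℤ[Λ] by e^λ ↦ e^{ξ_v(λ)}). -/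

import Mathlib

noncomputable section

/-- A moment graph on a lattice `Λ`: a poset of vertices (the order given as a
relation with axioms), a set of directed edges `E ⊆ V × V`, and a label function
assigning to each edge a nonzero element of `Λ`, such that edges respect the
order and are not loops. -/
structure MomentGraph (Λ : Type*) [AddCommGroup Λ] (V : Type*) where
  le : V → V → Prop
  le_refl : ∀ v, le v v
  le_trans : ∀ u v w, le u v → le v w → le u w
  le_antisymm : ∀ v w, le v w → le w v → v = w
  E : V → V → Prop
  label : V → V → Λ
  label_ne_zero : ∀ {v w}, E v w → label v w ≠ 0
  le_of_E : ∀ {v w}, E v w → le v w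
  ne_of_E : ∀ {v w}, E v w → v ≠ w

namespace MomentGraph

variable {Λ : Type*} [AddCommGroup Λ] {V V' : Type*}

/-- Underlying (unoriented) adjacency `v — w`. -/
def Adj (G : MomentGraph Λ V) (v w : V) : Prop := G.E v w ∨ G.E w v

open Classical in
/-- The label of the unoriented edge `v — w` (there are no multiple edges, so this
is well defined on adjacent pairs). -/
def albl (G : MomentGraph Λ V) (v w : V) : Λ := if G.E v w then G.label v w else G.label w v

/-- A morphism of moment graphs on the same lattice `Λ` (Definition 2.3):
a poset morphism on vertices sending edges to edges or collapsing them (MR1),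
together with a `ℤ`-linear automorphism of `Λ` for every vertex satisfying
(MR2)(a) and (MR2)(b). -/
structure Hom (G : MomentGraph Λ V) (G' : MomentGraph Λ V') where
  toFun : V → V'
  mono : ∀ {v w}, G.le v w → G'.le (toFun v) (toFun w)
  adj : ∀ {v w}, G.Adj v w → G'.Adj (toFun v) (toFun w) ∨ toFun v = toFun w
  aut : V → (Λ ≃ₗ[ℤ] Λ)
  label_pm : ∀ {v w}, G.Adj v w → toFun v ≠ toFun w →
      aut v (G.albl v w) = G'.albl (toFun v) (toFun w) ∨
      aut v (G.albl v w) = - G'.albl (toFun v) (toFun w)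
  compat : ∀ {v w}, G.Adj v w → toFun v ≠ toFun w → ∀ μ : Λ,
      ∃ n : ℤ, aut v μ - aut w μ = n • G'.albl (toFun v) (toFun w)

/-- A morphism of moment graphs is an isomorphism if it has a two-sided inverse
morphism, inverting both the vertex map and the label automorphisms. -/
def Hom.IsIso {G : MomentGraph Λ V} {G' : MomentGraph Λ V'} (f : G.Hom G') : Prop :=
  ∃ g : G'.Hom G, (∀ v, g.toFun (f.toFun v) = v) ∧ (∀ v', f.toFun (g.toFun v') = v') ∧
    ∀ v (μ : Λ), g.aut (f.toFun v) (f.aut v μ) = μ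

/-- A `Γ`-monodromy: a collection of lattice automorphisms `ξ_v` with
`ξ_v(λ) - ξ_w(λ) ∈ l(v → w)·ℤ` for all edges `v → w`. -/
def Monodromy (G : MomentGraph Λ V) (ξ : V → (Λ ≃ₗ[ℤ] Λ)) : Prop :=
  ∀ {v w}, G.E v w → ∀ μ : Λ, ∃ n : ℤ, ξ v μ - ξ w μ = n • G.label v w

/-- A `Γ`-compatible equivalence relation (EQV1) and (EQV2). -/
def Compatible (G : MomentGraph Λ V) (s : Setoid V) : Prop :=
  (∀ ⦃v w u⦄, s.r v w → G.le v u → G.le u w → s.r v u) ∧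
  (∀ ⦃v₁ w₁⦄, G.E v₁ w₁ → ¬ s.r v₁ w₁ → ∀ v₂, s.r v₂ v₁ →
    (∃! w₂, s.r w₂ w₁ ∧ G.E v₂ w₂) ∧
    (∀ w₂, s.r w₂ w₁ → G.E v₂ w₂ → G.label v₂ w₂ = G.label v₁ w₁))

/-- Edges of the quotient graph: `[v] → [w]` iff `v ≁ w` and there are
representatives joined by an edge. -/
def QE (G : MomentGraph Λ V) (s : Setoid V) (a b : Quotient s) : Prop :=
  a ≠ b ∧ ∃ v w, Quotient.mk s v = a ∧ Quotient.mk s w = b ∧ G.E v w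

open Classical in
/-- The label of a quotient edge, via a choice of representatives. -/
def Qlabel (G : MomentGraph Λ V) (s : Setoid V) (a b : Quotient s) : Λ :=
  if h : ∃ v, ∃ w, Quotient.mk s v = a ∧ Quotient.mk s w = b ∧ G.E v w
  then G.label h.choose h.choose_spec.choose else 0

/-- The covering relation of the vertex poset. -/
def cov (G : MomentGraph Λ V) (v w : V) : Prop :=
  G.le v w ∧ v ≠ w ∧ ∀ u, G.le v u → G.le u w → u = v ∨ u = w

/-- A special matching of the vertex poset (Definition of Brenti): a bijection `M`
such that `M(v)` covers or is covered by `v`, and if `M(v) ≠ w` and `v ⋖ w`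
then `M(v) ≤ M(w)`. -/
def SpecialMatching (G : MomentGraph Λ V) (M : V → V) : Prop :=
  Function.Bijective M ∧ (∀ v, G.cov (M v) v ∨ G.cov v (M v)) ∧
  (∀ v w, M v ≠ w → G.cov v w → G.le (M v) (M w))

end MomentGraph

noncomputable section StructureAlgebras

/-- The generic "structure algebra" construction: given an edge relation `E` on `V`
and an `A`-valued function `lab` (the image of the label of each edge in `A`),
this is the subalgebra of `∏_{v ∈ V} A` of tuples `(z_v)` with
`z_v - z_w ∈ lab v w · A` for every edge `v → w`, with coordinate-wise operations
and with `A` acting diagonally. -/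
def structAlg {V : Type*} {A : Type*} [CommRing A] (E : V → V → Prop) (lab : V → V → A) :
    Subalgebra A (V → A) where
  carrier := {z | ∀ ⦃v w⦄, E v w → ∃ t, z v - z w = lab v w * t}
  mul_mem' := by
    intro a b ha hb v w h
    obtain ⟨t, ht⟩ := ha h
    obtain ⟨t', ht'⟩ := hb h
    refine ⟨a v * t' + t * b w, ?_⟩
    simp only [Pi.mul_apply]
    linear_combination a v * ht' + b w * ht
  one_mem' := by intro v w h; exact ⟨0, by simp⟩
  add_mem' := by
    intro a b ha hb v w h
    obtain ⟨t, ht⟩ := ha h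
    obtain ⟨t', ht'⟩ := hb h
    refine ⟨t + t', ?_⟩
    simp only [Pi.add_apply]
    linear_combination ht + ht'
  zero_mem' := by intro v w h; exact ⟨0, by simp⟩
  algebraMap_mem' := by
    intro r v w h
    exact ⟨0, by simp⟩

set_option synthInstance.maxHeartbeats 4000000 in
instance structAlgAddCommGroup {V A : Type*} [CommRing A] (E : V → V → Prop)
    (lab : V → V → A) : AddCommGroup (structAlg E lab) :=
  inferInstance

set_option synthInstance.maxHeartbeats 4000000 in
instance structAlgModule {V A : Type*} [CommRing A] (E : V → V → Prop)
    (lab : V → V → A) : Module A (structAlg E lab) :=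
  inferInstance

/-- The group ring `ℤ[Λ]`. -/
abbrev GrpRing (Λ : Type*) [AddCommGroup Λ] := AddMonoidAlgebra ℤ Λ

variable {Λ : Type*} [AddCommGroup Λ]

/-- The basis element `e^μ` of the group ring `ℤ[Λ]`. -/
def grExp (μ : Λ) : GrpRing Λ := AddMonoidAlgebra.single μ 1

/-- The element `x_μ = 1 - e^{-μ}` of the group ring `ℤ[Λ]`. -/
def grX (μ : Λ) : GrpRing Λ := 1 - grExp (-μ)

/-- The augmentation `ℤ[Λ] → ℤ`, `e^λ ↦ 1`. -/
def grAug (Λ : Type*) [AddCommGroup Λ] : GrpRing Λ →+* ℤ :=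
  ((AddMonoidAlgebra.lift ℤ ℤ Λ) 1).toRingHom

/-- The augmentation ideal `I_m ⊂ ℤ[Λ]`. -/
def Im (Λ : Type*) [AddCommGroup Λ] : Ideal (GrpRing Λ) := RingHom.ker (grAug Λ)

/-- The multiplicative structure algebra of edge data `(E, lab)`:
tuples `(z_v)` of elements of `ℤ[Λ]` with `z_v - z_w ∈ x_{lab v w}·ℤ[Λ]`
for all edges. -/
abbrev ZmOf {V : Type*} (E : V → V → Prop) (lab : V → V → Λ) :
    Subalgebra (GrpRing Λ) (V → GrpRing Λ) :=
  structAlg E fun v w => grX (lab v w)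

/-- The multiplicative structure algebra `Z_m(Γ)` of a moment graph. -/
abbrev MomentGraph.Zm {V : Type*} (G : MomentGraph Λ V) :
    Subalgebra (GrpRing Λ) (V → GrpRing Λ) :=
  ZmOf G.E G.label

/-- Index type of a chosen basis of the lattice `Λ`. -/
abbrev bIdx (Λ : Type*) [AddCommGroup Λ] [Module.Free ℤ Λ] [Module.Finite ℤ Λ] :=
  Module.Free.ChooseBasisIndex ℤ Λ

/-- A model of the symmetric algebra `S^*(Λ)` over `ℤ`: the polynomial ring on a
basis of `Λ`. -/
abbrev SymZ (Λ : Type*) [AddCommGroup Λ] [Module.Free ℤ Λ] [Module.Finite ℤ Λ] :=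
  MvPolynomial (bIdx Λ) ℤ

variable [Module.Free ℤ Λ] [Module.Finite ℤ Λ]

/-- The canonical embedding `Λ → S^*(Λ)` (degree-one part). -/
def iotaZ (Λ : Type*) [AddCommGroup Λ] [Module.Free ℤ Λ] [Module.Finite ℤ Λ] :
    Λ →ₗ[ℤ] SymZ Λ :=
  (Finsupp.linearCombination ℤ fun i => (MvPolynomial.X i : SymZ Λ)).comp
    (Module.Free.chooseBasis ℤ Λ).repr.toLinearMap

/-- The additive structure algebra of edge data `(E, lab)`:
tuples `(z_v)` of elements of `S^*(Λ)` with `z_v - z_w ∈ l(v→w)·S^*(Λ)`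
for all edges. -/
abbrev ZaOf {V : Type*} (E : V → V → Prop) (lab : V → V → Λ) :
    Subalgebra (SymZ Λ) (V → SymZ Λ) :=
  structAlg E fun v w => iotaZ Λ (lab v w)

/-- The additive structure algebra `Z_a(Γ)` of a moment graph. -/
abbrev MomentGraph.Za {V : Type*} (G : MomentGraph Λ V) :
    Subalgebra (SymZ Λ) (V → SymZ Λ) :=
  ZaOf G.E G.label

end StructureAlgebras

noncomputable section Chern

variable {Λ : Type*} [AddCommGroup Λ] [Module.Free ℤ Λ] [Module.Finite ℤ Λ]

/-- A model of the rational symmetric algebra `S^*(Λ) ⊗ ℚ`. -/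
abbrev SymQ (Λ : Type*) [AddCommGroup Λ] [Module.Free ℤ Λ] [Module.Finite ℤ Λ] :=
  MvPolynomial (bIdx Λ) ℚ

/-- The canonical embedding `Λ → S^*(Λ) ⊗ ℚ`. -/
def iotaQ (Λ : Type*) [AddCommGroup Λ] [Module.Free ℤ Λ] [Module.Finite ℤ Λ] :
    Λ →ₗ[ℤ] SymQ Λ :=
  (Finsupp.linearCombination ℤ fun i => (MvPolynomial.X i : SymQ Λ)).comp
    (Module.Free.chooseBasis ℤ Λ).repr.toLinearMap

/-- The augmentation ideal `I_a` of the rational symmetric algebra: the kernel of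
the ring homomorphism sending every `λ ∈ Λ` to `0`. -/
def IaQ (Λ : Type*) [AddCommGroup Λ] [Module.Free ℤ Λ] [Module.Finite ℤ Λ] :
    Ideal (SymQ Λ) :=
  RingHom.ker (MvPolynomial.constantCoeff : SymQ Λ →+* ℚ)

/-- The truncated rational symmetric algebra `S^{≤ i}_ℚ(Λ) = (S^*(Λ)/I_a^{i+1}) ⊗ ℚ`. -/
abbrev STrunc (Λ : Type*) [AddCommGroup Λ] [Module.Free ℤ Λ] [Module.Finite ℤ Λ] (i : ℕ) :=
  SymQ Λ ⧸ (IaQ Λ) ^ (i + 1)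

/-- The quotient map `S^*_ℚ(Λ) → S^{≤ i}_ℚ(Λ)`. -/
def trMk (Λ : Type*) [AddCommGroup Λ] [Module.Free ℤ Λ] [Module.Finite ℤ Λ] (i : ℕ) :
    SymQ Λ →+* STrunc Λ i :=
  Ideal.Quotient.mk _

/-- The truncated exponential `Σ_{j ≤ i} μ^j/j!` in `S^{≤ i}_ℚ(Λ)`. -/
def texp (Λ : Type*) [AddCommGroup Λ] [Module.Free ℤ Λ] [Module.Finite ℤ Λ]
    (i : ℕ) (μ : Λ) : STrunc Λ i :=
  ∑ j ∈ Finset.range (i + 1), (j.factorial : ℚ)⁻¹ • (trMk Λ i (iotaQ Λ μ)) ^ j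

/-- The truncated rational additive structure algebra of edge data `(E, lab)`. -/
abbrev ZatOf {V : Type*} (i : ℕ) (E : V → V → Prop) (lab : V → V → Λ) :
    Subalgebra (STrunc Λ i) (V → STrunc Λ i) :=
  structAlg E fun v w => trMk Λ i (iotaQ Λ (lab v w))

/-- The truncated rational additive structure algebra `Z_a^{≤ i}(Γ)_ℚ`. -/
abbrev MomentGraph.Zat {V : Type*} (G : MomentGraph Λ V) (i : ℕ) :
    Subalgebra (STrunc Λ i) (V → STrunc Λ i) :=
  ZatOf i G.E G.label

end Chern

/-!
A lattice automorphism `ζ` extends to a `ℚ`-algebra automorphism of `S^*(Λ) ⊗ ℚ`; it preserves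
the augmentation ideal, hence descends to `S^{≤ i}_ℚ(Λ)`. For an edge `v → w` with label `l`, the
ring maps induced by `ξ_v` and `ξ_w` agree modulo `l` (resp. modulo `x_l`) on the generators `λ`
(resp. `e^λ`), because `ξ_v λ - ξ_w λ ∈ ℤ l` and `e^l ≡ 1 mod x_l`; so they agree modulo `l`
(resp. `x_l`) everywhere, which is membership in the structure algebras. Finally both sides of
the Chern character identity are additive, and on `e^λ` it is
`ξ_v(∑ λ^j/j!) = ∑ ξ_v(λ)^j/j!`.
-/

lemma dvd_sub_of_comp_mk_eq {A B : Type*} [Semiring A] [CommRing B] {f g : A →+* B} {a : B}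
    (h : (Ideal.Quotient.mk (Ideal.span {a})).comp f = (Ideal.Quotient.mk (Ideal.span {a})).comp g)
    (x : A) : a ∣ f x - g x := by
  rw [← Ideal.mem_span_singleton, ← Ideal.Quotient.eq]
  exact RingHom.congr_fun h x

section GroupRing

open AddMonoidAlgebra

variable {Λ : Type*} [AddCommGroup Λ]

lemma grExp_add (a b : Λ) : grExp (a + b) = grExp a * grExp b := by
  simp [grExp, single_mul_single]

lemma grExp_nsmul (n : ℕ) (a : Λ) : grExp (n • a) = grExp a ^ n := by
  simp [grExp, single_pow]

lemma grExp_ringHom_ext {R : Type*} [Ring R] {f g : GrpRing Λ →+* R}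
    (h : ∀ μ, f (grExp μ) = g (grExp μ)) : f = g :=
  ringHom_ext (fun r => by
    rw [show single 0 r = (r : GrpRing Λ) from rfl, map_intCast, map_intCast]) h

lemma grExp_addMonoidHom_ext {M : Type*} [AddCommGroup M] {f g : GrpRing Λ →+ M}
    (h : ∀ μ, f (grExp μ) = g (grExp μ)) : f = g :=
  addMonoidHom_ext fun μ r => by
    rw [show single μ r = r • grExp μ by rw [grExp, smul_single', mul_one], map_zsmul,
      map_zsmul, h]

lemma grX_dvd_grExp_zsmul_sub_one (l : Λ) (n : ℤ) : grX l ∣ grExp (n • l) - 1 := by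
  have hpos : grX l ∣ grExp l - 1 :=
    ⟨grExp l, by rw [grX, sub_mul, one_mul, ← grExp_add, neg_add_cancel]; rfl⟩
  have hneg : grX l ∣ grExp (-l) - 1 := ⟨-1, by rw [grX]; ring⟩
  obtain ⟨k, rfl | rfl⟩ := Int.eq_nat_or_neg n
  · rw [natCast_zsmul, grExp_nsmul]
    exact hpos.trans (sub_one_dvd_pow_sub_one _ k)
  · rw [neg_smul, ← smul_neg, natCast_zsmul, grExp_nsmul]
    exact hneg.trans (sub_one_dvd_pow_sub_one _ k)

lemma grX_dvd_grExp_add_zsmul_sub (l a : Λ) (n : ℤ) :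
    grX l ∣ grExp (a + n • l) - grExp a := by
  rw [grExp_add, ← mul_sub_one]
  exact (grX_dvd_grExp_zsmul_sub_one l n).mul_left _

lemma grX_dvd_sub {f g : GrpRing Λ →+* GrpRing Λ} {ζ η : Λ → Λ} {l : Λ}
    (hf : ∀ μ, f (grExp μ) = grExp (ζ μ)) (hg : ∀ μ, g (grExp μ) = grExp (η μ))
    (h : ∀ μ, ∃ n : ℤ, ζ μ - η μ = n • l) (z : GrpRing Λ) : grX l ∣ f z - g z := by
  refine dvd_sub_of_comp_mk_eq (grExp_ringHom_ext fun μ => ?_) z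
  obtain ⟨n, hn⟩ := h μ
  rw [RingHom.comp_apply, RingHom.comp_apply, Ideal.Quotient.eq, Ideal.mem_span_singleton, hf, hg,
    eq_add_of_sub_eq' hn]
  exact grX_dvd_grExp_add_zsmul_sub l (η μ) n

end GroupRing

noncomputable section Statements
open MomentGraph
variable {Λ : Type*} [AddCommGroup Λ] [Module.Free ℤ Λ] [Module.Finite ℤ Λ]
variable {V V' : Type*}

section SymmetricAlgebra

open MvPolynomial

lemma iotaQ_chooseBasis (j : bIdx Λ) :
    iotaQ Λ (Module.Free.chooseBasis ℤ Λ j) = (X j : SymQ Λ) := by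
  simp [iotaQ]

lemma constantCoeff_iotaQ (μ : Λ) : constantCoeff (iotaQ Λ μ) = 0 := by
  simp [iotaQ, Finsupp.linearCombination_apply, Finsupp.sum]

lemma iotaQ_ringHom_ext {R : Type*} [Semiring R] {f g : SymQ Λ →+* R}
    (h : ∀ μ, f (iotaQ Λ μ) = g (iotaQ Λ μ)) : f = g :=
  ringHom_ext' (Subsingleton.elim _ _) fun j => by rw [← iotaQ_chooseBasis, h]

def symMap (ζ : Λ →ₗ[ℤ] Λ) : SymQ Λ →ₐ[ℚ] SymQ Λ :=
  aeval fun j => iotaQ Λ (ζ (Module.Free.chooseBasis ℤ Λ j))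

lemma symMap_iotaQ (ζ : Λ →ₗ[ℤ] Λ) (μ : Λ) : symMap ζ (iotaQ Λ μ) = iotaQ Λ (ζ μ) := by
  have h : ((symMap ζ).toLinearMap.restrictScalars ℤ).comp (iotaQ Λ) = (iotaQ Λ).comp ζ :=
    (Module.Free.chooseBasis ℤ Λ).ext fun j => by simp [iotaQ_chooseBasis, symMap]
  exact LinearMap.congr_fun h μ

lemma eq_symMap_of_iotaQ {f : SymQ Λ →+* SymQ Λ} {ζ : Λ →ₗ[ℤ] Λ}
    (hf : ∀ μ, f (iotaQ Λ μ) = iotaQ Λ (ζ μ)) : f = symMap ζ :=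
  iotaQ_ringHom_ext fun μ => by simp [hf, symMap_iotaQ]

lemma symMap_comp (ζ η : Λ →ₗ[ℤ] Λ) : (symMap ζ).comp (symMap η) = symMap (ζ ∘ₗ η) :=
  AlgHom.coe_ringHom_injective <| eq_symMap_of_iotaQ fun μ => by simp [symMap_iotaQ]

lemma symMap_id : symMap (LinearMap.id : Λ →ₗ[ℤ] Λ) = AlgHom.id ℚ (SymQ Λ) :=
  AlgHom.coe_ringHom_injective (eq_symMap_of_iotaQ fun _ => rfl).symm

def symEquiv (ζ : Λ ≃ₗ[ℤ] Λ) : SymQ Λ ≃ₐ[ℚ] SymQ Λ :=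
  AlgEquiv.ofAlgHom (symMap ζ) (symMap ζ.symm)
    (by rw [symMap_comp, ζ.comp_symm, symMap_id])
    (by rw [symMap_comp, ζ.symm_comp, symMap_id])

lemma constantCoeff_symMap (ζ : Λ →ₗ[ℤ] Λ) (p : SymQ Λ) :
    constantCoeff (symMap ζ p) = constantCoeff p := by
  refine RingHom.congr_fun (f := constantCoeff.comp (symMap ζ : SymQ Λ →+* SymQ Λ))
    (iotaQ_ringHom_ext fun μ => ?_) p
  simp [symMap_iotaQ, constantCoeff_iotaQ]

lemma IaQ_map_symEquiv (ζ : Λ ≃ₗ[ℤ] Λ) :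
    (IaQ Λ).map (symEquiv ζ : SymQ Λ →+* SymQ Λ) = IaQ Λ := by
  change (IaQ Λ).map ((symEquiv ζ : SymQ Λ ≃+* SymQ Λ) : SymQ Λ →+* SymQ Λ) = IaQ Λ
  ext p
  rw [Ideal.map_comap_of_equiv, Ideal.mem_comap, IaQ, RingHom.mem_ker, RingHom.mem_ker]
  exact iff_of_eq (congrArg (· = 0) (constantCoeff_symMap ζ.symm.toLinearMap p))

def truncEquiv (i : ℕ) (ζ : Λ ≃ₗ[ℤ] Λ) : STrunc Λ i ≃ₐ[ℚ] STrunc Λ i :=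
  Ideal.quotientEquivAlg _ _ (symEquiv ζ) (by rw [Ideal.map_pow, IaQ_map_symEquiv])

lemma truncEquiv_trMk (i : ℕ) (ζ : Λ ≃ₗ[ℤ] Λ) (p : SymQ Λ) :
    truncEquiv i ζ (trMk Λ i p) = trMk Λ i (symMap ζ p) :=
  rfl

lemma truncEquiv_texp (i : ℕ) (ζ : Λ ≃ₗ[ℤ] Λ) (μ : Λ) :
    truncEquiv i ζ (texp Λ i μ) = texp Λ i (ζ μ) := by
  simp only [texp, map_sum, map_smul, map_pow, truncEquiv_trMk, symMap_iotaQ, LinearEquiv.coe_coe]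

lemma iotaQ_dvd_symMap_sub {ζ η : Λ →ₗ[ℤ] Λ} {l : Λ} (h : ∀ μ, ∃ n : ℤ, ζ μ - η μ = n • l)
    (p : SymQ Λ) : iotaQ Λ l ∣ symMap ζ p - symMap η p := by
  refine dvd_sub_of_comp_mk_eq (iotaQ_ringHom_ext fun μ => ?_) p
  obtain ⟨n, hn⟩ := h μ
  rw [RingHom.comp_apply, RingHom.comp_apply, Ideal.Quotient.eq, Ideal.mem_span_singleton]
  show iotaQ Λ l ∣ symMap ζ (iotaQ Λ μ) - symMap η (iotaQ Λ μ)
  rw [symMap_iotaQ, symMap_iotaQ, ← map_sub, hn, map_zsmul, zsmul_eq_mul]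
  exact dvd_mul_left _ _

end SymmetricAlgebra

theorem stmt13 (G : MomentGraph Λ V) (ξ : V → (Λ ≃ₗ[ℤ] Λ)) (hmon : G.Monodromy ξ)
    (i : ℕ) (ch : GrpRing Λ →ₗ[ℤ] STrunc Λ i)
    (hch : ∀ μ : Λ, ch (grExp μ) = texp Λ i μ)
    (gξ : V → (GrpRing Λ →+* GrpRing Λ))
    (hgξ : ∀ v (μ : Λ), gξ v (grExp μ) = grExp (ξ v μ))
    (sξQ : V → (SymQ Λ →+* SymQ Λ))
    (hsξQ : ∀ v (μ : Λ), sξQ v (iotaQ Λ μ) = iotaQ Λ (ξ v μ)) :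
    ∃ tξ : V → (STrunc Λ i ≃+* STrunc Λ i),
      (∀ (v : V) (p : SymQ Λ), tξ v (trMk Λ i p) = trMk Λ i (sξQ v p)) ∧
      (∀ p : STrunc Λ i, (fun v => tξ v p) ∈ G.Zat i) ∧
      (∀ z : GrpRing Λ, (fun v => gξ v z) ∈ G.Zm) ∧
      (∀ (z : GrpRing Λ) (v : V), tξ v (ch z) = ch (gξ v z)) := by
  have hsξQ_eq : ∀ v, sξQ v = (symMap (ξ v : Λ →ₗ[ℤ] Λ) : SymQ Λ →+* SymQ Λ) :=
    fun v => eq_symMap_of_iotaQ (hsξQ v)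
  refine ⟨fun v => (truncEquiv i (ξ v)).toRingEquiv, fun v p => ?_, fun p v w hvw => ?_,
    fun z v w hvw => grX_dvd_sub (hgξ v) (hgξ w) (hmon hvw) z, fun z v => ?_⟩
  · rw [hsξQ_eq]
    rfl
  · obtain ⟨q, rfl⟩ := Ideal.Quotient.mk_surjective p
    obtain ⟨t, ht⟩ := iotaQ_dvd_symMap_sub (hmon hvw) q
    exact ⟨trMk Λ i t, by rw [← map_mul, ← ht, map_sub]; rfl⟩
  · have hext : (truncEquiv i (ξ v)).toAddMonoidHom.comp ch.toAddMonoidHom =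
        ch.toAddMonoidHom.comp (gξ v).toAddMonoidHom :=
      grExp_addMonoidHom_ext fun μ => by simp [hch, hgξ, truncEquiv_texp]
    exact DFunLike.congr_fun hext z

end Statements
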